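/- Let p_{n,k} denote the number of integers in [F_n, F_{n+1}) whose Zeckendorf decomposition has exactly k summands. Then p_{n,k} satisfies the recurrence p_{n,k} = p_{n-1,k} + p_{n-2,k-1} for n ≥ 3, with p_{1,1} = p_{2,1} = 1 and p_{n,k} = 0 for k ≤ 0 or k > n. -/

import Mathlib

/-- Fibonacci numbers with the convention `F 1 = 1`, `F 2 = 2`. -/
def F (n : ℕ) : ℕ := Nat.fib (n + 1)

/-- `p n k` is the number of integers in `[F n, F (n+1))` whose Zeckendorf
decomposition has exactly `k` summands. -/
noncomputable def p (n k : ℕ) : ℕ :=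
  {m : ℕ | F n ≤ m ∧ m < F (n + 1) ∧
    ∃ S : Finset ℕ, (∀ i ∈ S, 1 ≤ i) ∧ (∀ i ∈ S, i + 1 ∉ S) ∧
      m = ∑ i ∈ S, F i ∧ S.card = k}.ncard

/-!
A set of pairwise non-consecutive indices all below `N` has `F`-sum below `F N` (insert the
largest index and use `F (b + 1) + F b = F (b + 2)`). Hence a number in `[F (n + 2), F (n + 3))`
has largest summand `F (n + 2)`, and removing it is a bijection onto the numbers below `F (n + 1)`
with one summand fewer. Counting those by splitting `[0, F (n + 2))` at `F (n + 1)` gives the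
recurrence.
-/

open Finset

lemma F_add_two (n : ℕ) : F (n + 2) = F (n + 1) + F n := Nat.fib_add_two.trans (add_comm _ _)

lemma F_monotone : Monotone F := fun _ _ h => Nat.fib_mono (by omega)

lemma F_pos (n : ℕ) : 0 < F n := Nat.fib_pos.mpr (by omega)

def IsZeckendorfSet (S : Finset ℕ) : Prop := (∀ i ∈ S, 1 ≤ i) ∧ ∀ i ∈ S, i + 1 ∉ S

def zeckSums (k : ℕ) : Set ℕ :=
  {m | ∃ S, IsZeckendorfSet S ∧ m = ∑ i ∈ S, F i ∧ S.card = k}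

lemma p_eq_ncard (n k : ℕ) : p n k = (Set.Ico (F n) (F (n + 1)) ∩ zeckSums k).ncard := by
  unfold p
  congr 1
  ext m
  simp only [zeckSums, IsZeckendorfSet, Set.mem_ofPred_eq, Set.mem_inter_iff, Set.mem_Ico, and_assoc]

namespace IsZeckendorfSet

variable {S T : Finset ℕ}

lemma mono (hS : IsZeckendorfSet S) (hT : T ⊆ S) : IsZeckendorfSet T :=
  ⟨fun i hi => hS.1 i (hT hi), fun i hi hi' => hS.2 i (hT hi) (hT hi')⟩

lemma insert_of_lt (hS : IsZeckendorfSet S) {a : ℕ} (ha : 1 ≤ a) (hlt : ∀ i ∈ S, i + 1 < a) :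
    IsZeckendorfSet (insert a S) := by
  refine ⟨fun i hi => ?_, fun i hi hi' => ?_⟩
  · rcases mem_insert.mp hi with rfl | hi
    exacts [ha, hS.1 i hi]
  · rcases mem_insert.mp hi with rfl | hi <;> rcases mem_insert.mp hi' with h | hi'
    · omega
    · have := hlt _ hi'; omega
    · have := hlt i hi; omega
    · exact hS.2 i hi hi'

lemma sum_lt (hS : IsZeckendorfSet S) {N : ℕ} (hN : ∀ i ∈ S, i < N) :
    ∑ i ∈ S, F i < F N := by
  induction S using Finset.induction_on_max generalizing N with
  | empty => simpa using F_pos N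
  | insert a s hlt ih =>
    have has : a ∉ s := fun h => (hlt a h).false
    obtain ⟨b, rfl⟩ : ∃ b, a = b + 1 := ⟨a - 1, by have := hS.1 a (mem_insert_self a s); omega⟩
    have hs : ∀ i ∈ s, i < b := fun i hi => by
      have := hlt i hi
      have := hS.2 i (mem_insert_of_mem hi)
      simp only [mem_insert, not_or] at this
      omega
    calc ∑ i ∈ insert (b + 1) s, F i = F (b + 1) + ∑ i ∈ s, F i := sum_insert has
      _ < F (b + 1) + F b := by gcongr; exact ih (hS.mono (subset_insert _ _)) hs
      _ = F (b + 2) := (F_add_two b).symm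
      _ ≤ F N := F_monotone (by have := hN _ (mem_insert_self _ s); omega)

lemma mem_of_F_le_sum (hS : IsZeckendorfSet S) {N : ℕ} (hle : F N ≤ ∑ i ∈ S, F i)
    (hN : ∀ i ∈ S, i ≤ N) : N ∈ S := by
  by_contra hNS
  have := hS.sum_lt (N := N) fun i hi => lt_of_le_of_ne (hN i hi) (by rintro rfl; exact hNS hi)
  omega

end IsZeckendorfSet

lemma lt_of_mem_of_sum_lt {S : Finset ℕ} {N i : ℕ} (hsum : ∑ j ∈ S, F j < F N) (hi : i ∈ S) :
    i < N := by
  by_contra! h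
  have := single_le_sum (fun j _ => Nat.zero_le (F j)) hi
  have := F_monotone h
  omega

lemma Ico_inter_zeckSums_succ (n k : ℕ) :
    Set.Ico (F (n + 2)) (F (n + 3)) ∩ zeckSums (k + 1) =
      (· + F (n + 2)) '' (Set.Iio (F (n + 1)) ∩ zeckSums k) := by
  ext m
  constructor
  · rintro ⟨⟨hlo, hhi⟩, S, hS, rfl, hcard⟩
    have hlt : ∀ i ∈ S, i < n + 3 := fun i hi => lt_of_mem_of_sum_lt hhi hi
    have htop : n + 2 ∈ S := hS.mem_of_F_le_sum hlo fun i hi => by have := hlt i hi; omega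
    have hrest : ∀ i ∈ S.erase (n + 2), i < n + 1 := fun i hi => by
      have := hlt i (mem_of_mem_erase hi)
      have := ne_of_mem_erase hi
      have : i ≠ n + 1 := by rintro rfl; exact hS.2 _ (mem_of_mem_erase hi) htop
      omega
    have hS' := hS.mono (erase_subset (n + 2) S)
    refine ⟨_, ⟨hS'.sum_lt hrest, _, hS', rfl, ?_⟩, sum_erase_add _ _ htop⟩
    rw [card_erase_of_mem htop, hcard, Nat.add_sub_cancel]
  · rintro ⟨_, ⟨hlt, T, hT, rfl, hcard⟩, rfl⟩
    have hT_lt : ∀ i ∈ T, i < n + 1 := fun i hi => lt_of_mem_of_sum_lt hlt hi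
    have hnot : n + 2 ∉ T := fun h => by have := hT_lt _ h; omega
    refine ⟨⟨Nat.le_add_left _ _, ?_⟩, insert (n + 2) T,
      hT.insert_of_lt (by omega) fun i hi => by have := hT_lt i hi; omega, ?_, ?_⟩
    · show ∑ i ∈ T, F i + F (n + 2) < F (n + 3)
      have : F (n + 3) = F (n + 2) + F (n + 1) := F_add_two (n + 1)
      have := Set.mem_Iio.mp hlt
      omega
    · rw [sum_insert hnot]
      exact add_comm _ _
    · rw [card_insert_of_notMem hnot, hcard]

lemma p_add_two_succ (n k : ℕ) :
    p (n + 2) (k + 1) = (Set.Iio (F (n + 1)) ∩ zeckSums k).ncard := by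
  rw [p_eq_ncard, Ico_inter_zeckSums_succ,
    Set.ncard_image_of_injective _ (add_left_injective (F (n + 2)))]

lemma ncard_Iio_inter_zeckSums_succ (n k : ℕ) :
    (Set.Iio (F (n + 2)) ∩ zeckSums k).ncard =
      (Set.Iio (F (n + 1)) ∩ zeckSums k).ncard + p (n + 1) k := by
  have hdisj : Disjoint (Set.Iio (F (n + 1)) ∩ zeckSums k)
      (Set.Ico (F (n + 1)) (F (n + 2)) ∩ zeckSums k) :=
    ((Set.Iio_disjoint_Ici le_rfl).mono_right Set.Ico_subset_Ici_self).mono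
      Set.inter_subset_left Set.inter_subset_left
  rw [p_eq_ncard, ← Set.ncard_union_eq hdisj ((Set.finite_Iio _).inter_of_left _)
      ((Set.finite_Ico _ _).inter_of_left _), ← Set.union_inter_distrib_right,
    Set.Iio_union_Ico_eq_Iio (F_monotone (Nat.le_succ _))]

lemma p_zero_right (n : ℕ) : p n 0 = 0 := by
  rw [p_eq_ncard, Set.ncard_eq_zero ((Set.finite_Ico _ _).inter_of_left _)]
  refine Set.eq_empty_of_forall_notMem ?_
  rintro m ⟨⟨hlo, -⟩, S, -, rfl, hcard⟩
  rw [card_eq_zero.mp hcard, sum_empty] at hlo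
  exact (F_pos n).not_ge hlo

lemma p_eq_zero_of_lt {n k : ℕ} (h : n < k) : p n k = 0 := by
  rw [p_eq_ncard, Set.ncard_eq_zero ((Set.finite_Ico _ _).inter_of_left _)]
  refine Set.eq_empty_of_forall_notMem ?_
  rintro m ⟨⟨-, hhi⟩, S, hS, rfl, rfl⟩
  have hsub : S ⊆ Icc 1 n := fun i hi =>
    mem_Icc.mpr ⟨hS.1 i hi, Nat.lt_succ_iff.mp (lt_of_mem_of_sum_lt hhi hi)⟩
  have := card_le_card hsub
  rw [Nat.card_Icc] at this
  omega

lemma p_one_right_of_F_succ {n : ℕ} (hn : 1 ≤ n) (hF : F (n + 1) = F n + 1) : p n 1 = 1 := by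
  have hmem : F n ∈ zeckSums 1 :=
    ⟨{n}, ⟨by simpa using hn, by simp⟩, by rw [sum_singleton], card_singleton n⟩
  rw [p_eq_ncard, hF, Set.Ico_add_one_right_eq_Icc, Set.Icc_self,
    Set.inter_eq_left.mpr (Set.singleton_subset_iff.mpr hmem), Set.ncard_singleton]

/-- The counts `p n k` satisfy `p n k = p (n-1) k + p (n-2) (k-1)` for `n ≥ 3`,
with `p 1 1 = p 2 1 = 1` and `p n k = 0` for `k ≤ 0` or `k > n`. -/
theorem p_recurrence :
    (∀ n k : ℕ, 3 ≤ n → p n k = p (n - 1) k + p (n - 2) (k - 1)) ∧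
    p 1 1 = 1 ∧ p 2 1 = 1 ∧
    (∀ n k : ℕ, k = 0 ∨ n < k → p n k = 0) := by
  refine ⟨fun n k hn => ?_, p_one_right_of_F_succ le_rfl rfl,
    p_one_right_of_F_succ (by norm_num) rfl, fun n k hk => ?_⟩
  · obtain ⟨n, rfl⟩ : ∃ m, n = m + 3 := ⟨n - 3, by omega⟩
    rcases k with _ | k
    · simp only [p_zero_right, Nat.zero_sub, add_zero]
    · show p (n + 1 + 2) (k + 1) = p (n + 2) (k + 1) + p (n + 1) k
      rw [p_add_two_succ, p_add_two_succ, ncard_Iio_inter_zeckSums_succ]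
  · rcases hk with rfl | hlt
    exacts [p_zero_right n, p_eq_zero_of_lt hlt]
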